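/- Let f be convex with L-Lipschitz gradient on ℝⁿ, with minimizer x⋆, and let 0 < s ≤ 1/(3L). Then the iterates of the symplectic Euler scheme for the modified high-resolution NAG-C ODE satisfy, for every k ≥ 0, f(x_k) − f(x⋆) ≤ 119‖x₀ − x⋆‖² / (s(k+1)²) and min_{0 ≤ i ≤ k} ‖∇f(x_i)‖² ≤ 8568‖x₀ − x⋆‖² / (s²(k+1)³). -/

import Mathlib

/-!
With `y (k + 1) = x k - s ∇f (x k)` and `y 0 = x 0`, the symplectic Euler scheme is exactly
NAG-C, `x (k + 1) = y (k + 1) + k / (k + 3) (y (k + 1) - y k)`. For the weights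
`t k = (k + 2) / 2`, the momentum `u k = t k (x k - x⋆) - (t k - 1) (y k - x⋆)` evolves by
`u (k + 1) = u k - s t k ∇f (x k)`, and convexity, cocoercivity and the descent lemma (with
`s L ≤ 1 / 3`) show that the energy `s t k (t k - 1) (f (y k) - f x⋆) + ‖u k‖² / 2` drops by at
least `s² (t k)² ‖∇f (x k)‖² / 3` at every step. It starts at `‖x 0 - x⋆‖² / 2`, which gives the
`O(1 / (s k²))` rate for `f (y k)` and, after summing the drops, the `O(1 / (s² k³))` rate for
the smallest gradient. Finally `‖u k‖` and `‖y k - x⋆‖` stay below `‖x 0 - x⋆‖`, so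
`t k ‖x k - y k‖ ≤ 2 ‖x 0 - x⋆‖`, and the descent lemma at `y k` transfers the rate to `x k`.
-/

open scoped RealInnerProductSpace
open Set

theorem ConvexOn.comp_add_smul {V : Type*} [AddCommGroup V] [Module ℝ V] {f : V → ℝ}
    (hf : ConvexOn ℝ univ f) (a d : V) : ConvexOn ℝ univ fun τ : ℝ => f (a + τ • d) := by
  have := hf.comp_affineMap (AffineMap.lineMap a (a + d))
  rw [preimage_univ] at this
  refine this.congr fun τ _ => ?_
  simp [AffineMap.lineMap_apply_module', add_comm]

variable {E : Type*} [NormedAddCommGroup E] [InnerProductSpace ℝ E]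

section FirstOrder

variable [CompleteSpace E] {f : E → ℝ} {f' : E → E} {g a : E} {L : ℝ}

theorem HasGradientAt.hasDerivAt_comp_add_smul {d : E} {t : ℝ}
    (h : HasGradientAt f g (a + t • d)) :
    HasDerivAt (fun τ : ℝ => f (a + τ • d)) ⟪g, d⟫ t := by
  have hline : HasDerivAt (fun τ : ℝ => a + τ • d) d t := by
    simpa using ((hasDerivAt_id t).smul_const d).const_add a
  have := (hasGradientAt_iff_hasFDerivAt.mp h).comp_hasDerivAt t hline
  simp only [InnerProductSpace.toDual_apply_apply] at this
  exact this

theorem IsLocalMin.hasGradientAt_eq_zero (h : IsLocalMin f a) (hf : HasGradientAt f g a) :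
    g = 0 :=
  (InnerProductSpace.toDual ℝ E).map_eq_zero_iff.mp
    (h.hasFDerivAt_eq_zero (hasGradientAt_iff_hasFDerivAt.mp hf))

theorem ConvexOn.add_inner_le_of_hasGradientAt (hf : ConvexOn ℝ univ f)
    (h : HasGradientAt f g a) (b : E) : f a + ⟪g, b - a⟫ ≤ f b := by
  have hderiv : HasDerivAt (fun τ : ℝ => f (a + τ • (b - a))) ⟪g, b - a⟫ 0 :=
    HasGradientAt.hasDerivAt_comp_add_smul (by simpa using h)
  have := (hf.comp_add_smul a (b - a)).le_slope_of_hasDerivAt (mem_univ 0) (mem_univ 1) one_pos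
    hderiv
  simp only [slope_def_field, one_smul, add_sub_cancel, zero_smul, add_zero, sub_zero,
    div_one] at this
  linarith

theorem le_add_inner_add_of_lipschitz_gradient (hgrad : ∀ z, HasGradientAt f (f' z) z)
    (hLip : ∀ z w, ‖f' z - f' w‖ ≤ L * ‖z - w‖) (a b : E) :
    f b ≤ f a + ⟪f' a, b - a⟫ + L / 2 * ‖b - a‖ ^ 2 := by
  set d := b - a
  set ψ : ℝ → ℝ := fun τ => f (a + τ • d) - τ * ⟪f' a, d⟫ - L / 2 * τ ^ 2 * ‖d‖ ^ 2
  have hψ : ∀ τ, HasDerivAt ψ (⟪f' (a + τ • d) - f' a, d⟫ - L * τ * ‖d‖ ^ 2) τ := by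
    intro τ
    refine ((((hgrad (a + τ • d)).hasDerivAt_comp_add_smul).sub
      ((hasDerivAt_id τ).mul_const ⟪f' a, d⟫)).sub
      (((hasDerivAt_pow 2 τ).const_mul (L / 2)).mul_const (‖d‖ ^ 2))).congr_deriv ?_
    rw [inner_sub_left]
    push_cast
    ring
  have hanti : AntitoneOn ψ (Icc 0 1) := by
    refine antitoneOn_of_hasDerivWithinAt_nonpos (convex_Icc 0 1)
      (fun τ _ => (hψ τ).continuousAt.continuousWithinAt)
      (fun τ _ => (hψ τ).hasDerivWithinAt) fun τ hτ => ?_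
    rw [interior_Icc] at hτ
    have hlip : ‖f' (a + τ • d) - f' a‖ ≤ L * (τ * ‖d‖) := by
      simpa [norm_smul, abs_of_pos hτ.1] using hLip (a + τ • d) a
    have := real_inner_le_norm (f' (a + τ • d) - f' a) d
    nlinarith [norm_nonneg d]
  have := hanti (left_mem_Icc.mpr zero_le_one) (right_mem_Icc.mpr zero_le_one) zero_le_one
  simp only [ψ, d, zero_smul, add_zero, one_smul, add_sub_cancel] at this
  linarith

theorem apply_sub_smul_le_of_lipschitz_gradient (hgrad : ∀ z, HasGradientAt f (f' z) z)
    (hLip : ∀ z w, ‖f' z - f' w‖ ≤ L * ‖z - w‖) (a : E) (s : ℝ) :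
    f (a - s • f' a) ≤ f a - s * (1 - L * s / 2) * ‖f' a‖ ^ 2 := by
  have := le_add_inner_add_of_lipschitz_gradient hgrad hLip a (a - s • f' a)
  rw [sub_sub_cancel_left, inner_neg_right, real_inner_smul_right, real_inner_self_eq_norm_sq,
    norm_neg, norm_smul, Real.norm_eq_abs, mul_pow, sq_abs] at this
  linarith

structure IsConvexLSmooth (f : E → ℝ) (f' : E → E) (L : ℝ) : Prop where
  hasGradientAt : ∀ z, HasGradientAt f (f' z) z
  convexOn : ConvexOn ℝ univ f
  lipschitz : ∀ z w, ‖f' z - f' w‖ ≤ L * ‖z - w‖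

namespace IsConvexLSmooth

variable {xstar : E}

theorem add_inner_le (hf : IsConvexLSmooth f f' L) (a b : E) : f a + ⟪f' a, b - a⟫ ≤ f b :=
  hf.convexOn.add_inner_le_of_hasGradientAt (hf.hasGradientAt a) b

theorem le_add_inner_add (hf : IsConvexLSmooth f f' L) (a b : E) :
    f b ≤ f a + ⟪f' a, b - a⟫ + L / 2 * ‖b - a‖ ^ 2 :=
  le_add_inner_add_of_lipschitz_gradient hf.hasGradientAt hf.lipschitz a b

theorem gradient_eq_zero_of_forall_le (hf : IsConvexLSmooth f f' L)
    (hmin : ∀ z, f xstar ≤ f z) : f' xstar = 0 :=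
  IsLocalMin.hasGradientAt_eq_zero (Filter.Eventually.of_forall hmin) (hf.hasGradientAt xstar)

/-- Descend from `b` along `-(f' b - f' a) / L` and compare with the supporting hyperplane
at `a`. -/
theorem add_inner_add_sq_norm_sub_le (hf : IsConvexLSmooth f f' L) (hL : 0 < L) (a b : E) :
    f a + ⟪f' a, b - a⟫ + ‖f' b - f' a‖ ^ 2 / (2 * L) ≤ f b := by
  set c := b - L⁻¹ • (f' b - f' a)
  have hdesc := hf.le_add_inner_add b c
  have hsupp := hf.add_inner_le a c
  have hcb : c - b = -(L⁻¹ • (f' b - f' a)) := by simp [c]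
  have hca : c - a = (b - a) - L⁻¹ • (f' b - f' a) := by simp only [c]; abel
  rw [hcb, inner_neg_right, real_inner_smul_right, norm_neg, norm_smul, Real.norm_eq_abs,
    mul_pow, sq_abs] at hdesc
  rw [hca, inner_sub_right, real_inner_smul_right] at hsupp
  have hsq : L⁻¹ * ⟪f' b, f' b - f' a⟫ - L⁻¹ * ⟪f' a, f' b - f' a⟫
      = L⁻¹ * ‖f' b - f' a‖ ^ 2 := by
    rw [← mul_sub, ← inner_sub_left, real_inner_self_eq_norm_sq]
  have hcoeff : L⁻¹ * ‖f' b - f' a‖ ^ 2 - L / 2 * (L⁻¹ ^ 2 * ‖f' b - f' a‖ ^ 2)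
      = ‖f' b - f' a‖ ^ 2 / (2 * L) := by
    field_simp
    ring
  linarith

theorem sq_norm_le_mul_sub (hf : IsConvexLSmooth f f' L) (hL : 0 < L) (hstar : f' xstar = 0)
    (b : E) : ‖f' b‖ ^ 2 ≤ 2 * L * (f b - f xstar) := by
  have := hf.add_inner_add_sq_norm_sub_le hL xstar b
  rw [hstar, inner_zero_left, add_zero, sub_zero] at this
  have hdiv : ‖f' b‖ ^ 2 / (2 * L) ≤ f b - f xstar := by linarith
  rwa [div_le_iff₀ (by positivity), mul_comm] at hdiv

theorem mul_sub_le_mul_sub_add_inner (hf : IsConvexLSmooth f f' L) (hL : 0 < L)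
    (hstar : f' xstar = 0) {t : ℝ} (ht : 1 ≤ t) (a b : E) :
    t * (f a - f xstar) ≤ (t - 1) * (f b - f xstar) + ⟪f' a, (t - 1) • (a - b) + (a - xstar)⟫
      - ‖f' a‖ ^ 2 / (2 * L) := by
  have hsupp := mul_le_mul_of_nonneg_left (hf.add_inner_le a b) (sub_nonneg.mpr ht)
  have hcoco := hf.add_inner_add_sq_norm_sub_le hL a xstar
  rw [hstar, zero_sub, norm_neg, ← neg_sub a xstar, inner_neg_right] at hcoco
  rw [← neg_sub a b, inner_neg_right] at hsupp
  rw [inner_add_right, real_inner_smul_right]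
  linarith

theorem mul_sub_le_mul_sub_add_sq_norm_sub (hf : IsConvexLSmooth f f' L) (hL : 0 < L)
    (hstar : f' xstar = 0) {s : ℝ} (hs : 0 ≤ s) (hsL : s * L ≤ 1 / 3) (a b : E) :
    s * (f a - f xstar) ≤ 3 / 2 * (s * (f b - f xstar)) + ‖a - b‖ ^ 2 / 2 := by
  have hdesc := mul_le_mul_of_nonneg_left (hf.le_add_inner_add b a) hs
  have hgap : 0 ≤ s * (f b - f xstar) := by
    have := hf.sq_norm_le_mul_sub hL hstar b
    nlinarith [sq_nonneg ‖f' b‖]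
  have hyoung : s * ⟪f' b, a - b⟫ ≤ 3 / 4 * s ^ 2 * ‖f' b‖ ^ 2 + ‖a - b‖ ^ 2 / 3 := by
    have := mul_le_mul_of_nonneg_left (real_inner_le_norm (f' b) (a - b)) hs
    nlinarith [sq_nonneg (3 / 2 * s * ‖f' b‖ - ‖a - b‖)]
  have hgrad : 3 / 4 * s ^ 2 * ‖f' b‖ ^ 2 ≤ s * (f b - f xstar) / 2 := by
    have := mul_le_mul_of_nonneg_left (hf.sq_norm_le_mul_sub hL hstar b) (sq_nonneg s)
    nlinarith [mul_le_mul_of_nonneg_right hsL hgap]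
  have hquad : s * (L / 2 * ‖a - b‖ ^ 2) ≤ ‖a - b‖ ^ 2 / 6 := by
    nlinarith [sq_nonneg ‖a - b‖]
  linarith

end IsConvexLSmooth

end FirstOrder

noncomputable def nagWeight (k : ℕ) : ℝ := ((k : ℝ) + 2) / 2

theorem nagWeight_zero : nagWeight 0 = 1 := by norm_num [nagWeight]

theorem one_le_nagWeight (k : ℕ) : 1 ≤ nagWeight k := by
  unfold nagWeight
  linarith [(k.cast_nonneg : (0 : ℝ) ≤ k)]

theorem nagWeight_succ_mul_le (k : ℕ) :
    nagWeight (k + 1) * (nagWeight (k + 1) - 1) ≤ nagWeight k ^ 2 := by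
  unfold nagWeight
  push_cast
  nlinarith

theorem cube_div_le_sum_sq_nagWeight (k : ℕ) :
    ((k : ℝ) + 1) ^ 3 / 12 ≤ ∑ i ∈ Finset.range (k + 1), nagWeight i ^ 2 := by
  induction k with
  | zero => norm_num [nagWeight]
  | succ k ih =>
    rw [Finset.sum_range_succ]
    unfold nagWeight at ih ⊢
    push_cast at ih ⊢
    nlinarith [(k.cast_nonneg : (0 : ℝ) ≤ k)]

section NAGC

variable {V : Type*} [AddCommGroup V] [Module ℝ V]

def gradientSteps (s : ℝ) (f' : V → V) (x : ℕ → V) : ℕ → V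
  | 0 => x 0
  | k + 1 => x k - s • f' (x k)

/-- NAG-C in terms of `x k` and `y k = gradientSteps s f' x k`: `y (k + 1) = x k - s • f' (x k)`
and `x (k + 1) = y (k + 1) + k / (k + 3) • (y (k + 1) - y k)`. -/
def IsNAGC (s : ℝ) (f' : V → V) (x : ℕ → V) : Prop :=
  ∀ k, nagWeight (k + 1) • (x (k + 1) - gradientSteps s f' x (k + 1)) =
    (nagWeight k - 1) • (gradientSteps s f' x (k + 1) - gradientSteps s f' x k)

theorem isNAGC_of_symplecticEuler {s : ℝ} (hs : 0 ≤ s) {f' : V → V} {x v : ℕ → V}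
    (hv0 : v 0 = -(Real.sqrt s • f' (x 0)))
    (hx : ∀ k : ℕ, x (k + 1) - x k = Real.sqrt s • v k)
    (hv : ∀ k : ℕ, v (k + 1) - v k = -((3 / ((k : ℝ) + 1)) • v (k + 1))
      - Real.sqrt s • (f' (x (k + 1)) - f' (x k))
      - (Real.sqrt s * (((k : ℝ) + 4) / ((k : ℝ) + 1))) • f' (x (k + 1))) :
    IsNAGC s f' x := by
  have hsqrt : Real.sqrt s * Real.sqrt s = s := Real.mul_self_sqrt hs
  rintro (_ | k)
  · have hx1 : x 1 = x 0 - s • f' (x 0) := by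
      have := hx 0
      rw [hv0, smul_neg, smul_smul, hsqrt] at this
      linear_combination (norm := module) this
    simp [gradientSteps, nagWeight, hx1]
  · have hk : ((k : ℝ) + 1) ≠ 0 := by positivity
    have hvk := congrArg (((k : ℝ) + 1) • ·) (hv k)
    simp only [smul_sub, smul_neg, smul_smul] at hvk
    rw [mul_div_cancel₀ _ hk, show ((k : ℝ) + 1) * (Real.sqrt s * (((k : ℝ) + 4) / ((k : ℝ) + 1)))
      = Real.sqrt s * ((k : ℝ) + 4) by field_simp] at hvk
    simp only [gradientSteps, nagWeight]
    push_cast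
    rw [← hsqrt]
    linear_combination (norm := module)
      (((k : ℝ) + 4) / 2) • hx (k + 1) - (((k : ℝ) + 1) / 2) • hx k + (Real.sqrt s / 2) • hvk

noncomputable def nagMomentum (s : ℝ) (f' : V → V) (xstar : V) (x : ℕ → V) (k : ℕ) : V :=
  nagWeight k • (x k - xstar) - (nagWeight k - 1) • (gradientSteps s f' x k - xstar)

variable {s : ℝ} {f' : V → V} {xstar : V} {x : ℕ → V}

theorem nagMomentum_eq (k : ℕ) : nagMomentum s f' xstar x k =
    (nagWeight k - 1) • (x k - gradientSteps s f' x k) + (x k - xstar) := by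
  unfold nagMomentum
  module

theorem IsNAGC.nagMomentum_succ_eq (h : IsNAGC s f' x) (k : ℕ) :
    nagMomentum s f' xstar x (k + 1) = nagWeight k • (gradientSteps s f' x (k + 1) - xstar) -
      (nagWeight k - 1) • (gradientSteps s f' x k - xstar) := by
  unfold nagMomentum
  linear_combination (norm := module) h k

theorem IsNAGC.nagMomentum_succ (h : IsNAGC s f' x) (k : ℕ) :
    nagMomentum s f' xstar x (k + 1) =
      nagMomentum s f' xstar x k - (s * nagWeight k) • f' (x k) := by
  rw [h.nagMomentum_succ_eq, nagMomentum, gradientSteps]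
  module

end NAGC

section Lyapunov

variable {f : E → ℝ} {f' : E → E} {L s : ℝ} {x : ℕ → E} {xstar : E}

noncomputable def nagEnergy (f : E → ℝ) (f' : E → E) (s : ℝ) (xstar : E) (x : ℕ → E)
    (k : ℕ) : ℝ :=
  s * (nagWeight k * (nagWeight k - 1)) * (f (gradientSteps s f' x k) - f xstar) +
    ‖nagMomentum s f' xstar x k‖ ^ 2 / 2

theorem nagEnergy_zero : nagEnergy f f' s xstar x 0 = ‖x 0 - xstar‖ ^ 2 / 2 := by
  simp [nagEnergy, nagMomentum, nagWeight_zero, gradientSteps]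

theorem mul_sub_gradientSteps_nonneg (hs : 0 ≤ s) (hmin : ∀ z, f xstar ≤ f z) (k : ℕ) :
    0 ≤ s * (nagWeight k * (nagWeight k - 1)) * (f (gradientSteps s f' x k) - f xstar) := by
  have := sub_nonneg.mpr (hmin (gradientSteps s f' x k))
  have : 0 ≤ nagWeight k - 1 := sub_nonneg.mpr (one_le_nagWeight k)
  have := one_le_nagWeight k
  positivity

theorem nagEnergy_nonneg (hs : 0 ≤ s) (hmin : ∀ z, f xstar ≤ f z) (k : ℕ) :
    0 ≤ nagEnergy f f' s xstar x k := by
  have := mul_sub_gradientSteps_nonneg (f' := f') (x := x) hs hmin k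
  rw [nagEnergy]
  positivity

variable [CompleteSpace E]

namespace IsNAGC

theorem nagEnergy_succ_add_le (h : IsNAGC s f' x) (hf : IsConvexLSmooth f f' L) (hL : 0 < L)
    (hs : 0 ≤ s) (hsL : s * L ≤ 1 / 3) (hmin : ∀ z, f xstar ≤ f z) (k : ℕ) :
    nagEnergy f f' s xstar x (k + 1) + s ^ 2 * nagWeight k ^ 2 / 3 * ‖f' (x k)‖ ^ 2 ≤
      nagEnergy f f' s xstar x k := by
  have hstar := hf.gradient_eq_zero_of_forall_le hmin
  have hcomb := hf.mul_sub_le_mul_sub_add_inner hL hstar (one_le_nagWeight k) (x k)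
    (gradientSteps s f' x k)
  rw [← nagMomentum_eq] at hcomb
  have hdesc : f (gradientSteps s f' x (k + 1)) ≤
      f (x k) - s * (1 - L * s / 2) * ‖f' (x k)‖ ^ 2 :=
    apply_sub_smul_le_of_lipschitz_gradient hf.hasGradientAt hf.lipschitz (x k) s
  have hmom : ‖nagMomentum s f' xstar x (k + 1)‖ ^ 2 = ‖nagMomentum s f' xstar x k‖ ^ 2 -
      2 * (s * nagWeight k) * ⟪f' (x k), nagMomentum s f' xstar x k⟫ +
      (s * nagWeight k) ^ 2 * ‖f' (x k)‖ ^ 2 := by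
    rw [h.nagMomentum_succ, norm_sub_sq_real, real_inner_smul_right, norm_smul, Real.norm_eq_abs,
      mul_pow, sq_abs, real_inner_comm]
    ring
  have hweight : s * (nagWeight (k + 1) * (nagWeight (k + 1) - 1)) *
      (f (gradientSteps s f' x (k + 1)) - f xstar) ≤
      s * nagWeight k ^ 2 * (f (gradientSteps s f' x (k + 1)) - f xstar) :=
    mul_le_mul_of_nonneg_right (mul_le_mul_of_nonneg_left (nagWeight_succ_mul_le k) hs)
      (sub_nonneg.mpr (hmin _))
  have ht := one_le_nagWeight k
  have h1 := mul_le_mul_of_nonneg_left hdesc (by positivity : 0 ≤ s * nagWeight k ^ 2)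
  have h2 := mul_le_mul_of_nonneg_left hcomb (by positivity : 0 ≤ s * nagWeight k)
  have h3 : 0 ≤ s * nagWeight k * (‖f' (x k)‖ ^ 2 / (2 * L)) := by positivity
  have h4 : s ^ 2 * nagWeight k ^ 2 * ‖f' (x k)‖ ^ 2 * (s * L) ≤
      s ^ 2 * nagWeight k ^ 2 * ‖f' (x k)‖ ^ 2 * (1 / 3) :=
    mul_le_mul_of_nonneg_left hsL (by positivity)
  rw [nagEnergy, nagEnergy, hmom]
  linarith

theorem nagEnergy_add_sum_le (h : IsNAGC s f' x) (hf : IsConvexLSmooth f f' L) (hL : 0 < L)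
    (hs : 0 ≤ s) (hsL : s * L ≤ 1 / 3) (hmin : ∀ z, f xstar ≤ f z) (k : ℕ) :
    nagEnergy f f' s xstar x k +
        ∑ i ∈ Finset.range k, s ^ 2 * nagWeight i ^ 2 / 3 * ‖f' (x i)‖ ^ 2 ≤
      ‖x 0 - xstar‖ ^ 2 / 2 := by
  induction k with
  | zero => simp [nagEnergy_zero]
  | succ k ih =>
    rw [Finset.sum_range_succ]
    linarith [h.nagEnergy_succ_add_le hf hL hs hsL hmin k]

theorem nagEnergy_le (h : IsNAGC s f' x) (hf : IsConvexLSmooth f f' L) (hL : 0 < L)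
    (hs : 0 ≤ s) (hsL : s * L ≤ 1 / 3) (hmin : ∀ z, f xstar ≤ f z) (k : ℕ) :
    nagEnergy f f' s xstar x k ≤ ‖x 0 - xstar‖ ^ 2 / 2 := by
  have := h.nagEnergy_add_sum_le hf hL hs hsL hmin k
  have : 0 ≤ ∑ i ∈ Finset.range k, s ^ 2 * nagWeight i ^ 2 / 3 * ‖f' (x i)‖ ^ 2 := by
    positivity
  linarith

theorem sum_sq_norm_le (h : IsNAGC s f' x) (hf : IsConvexLSmooth f f' L) (hL : 0 < L)
    (hs : 0 ≤ s) (hsL : s * L ≤ 1 / 3) (hmin : ∀ z, f xstar ≤ f z) (k : ℕ) :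
    ∑ i ∈ Finset.range k, s ^ 2 * nagWeight i ^ 2 / 3 * ‖f' (x i)‖ ^ 2 ≤
      ‖x 0 - xstar‖ ^ 2 / 2 := by
  linarith [h.nagEnergy_add_sum_le hf hL hs hsL hmin k,
    nagEnergy_nonneg (f' := f') (x := x) hs hmin k]

theorem norm_nagMomentum_le (h : IsNAGC s f' x) (hf : IsConvexLSmooth f f' L) (hL : 0 < L)
    (hs : 0 ≤ s) (hsL : s * L ≤ 1 / 3) (hmin : ∀ z, f xstar ≤ f z) (k : ℕ) :
    ‖nagMomentum s f' xstar x k‖ ≤ ‖x 0 - xstar‖ := by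
  have := h.nagEnergy_le hf hL hs hsL hmin k
  rw [nagEnergy] at this
  have := mul_sub_gradientSteps_nonneg (f' := f') (x := x) hs hmin k
  exact (sq_le_sq₀ (norm_nonneg _) (norm_nonneg _)).mp (by linarith)

theorem mul_sub_gradientSteps_le (h : IsNAGC s f' x) (hf : IsConvexLSmooth f f' L)
    (hL : 0 < L) (hs : 0 ≤ s) (hsL : s * L ≤ 1 / 3) (hmin : ∀ z, f xstar ≤ f z) (k : ℕ) :
    s * (nagWeight k * (nagWeight k - 1)) * (f (gradientSteps s f' x k) - f xstar) ≤
      ‖x 0 - xstar‖ ^ 2 / 2 := by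
  have := h.nagEnergy_le hf hL hs hsL hmin k
  rw [nagEnergy] at this
  nlinarith [sq_nonneg ‖nagMomentum s f' xstar x k‖]

theorem norm_gradientSteps_sub_le (h : IsNAGC s f' x) (hf : IsConvexLSmooth f f' L)
    (hL : 0 < L) (hs : 0 ≤ s) (hsL : s * L ≤ 1 / 3) (hmin : ∀ z, f xstar ≤ f z) (k : ℕ) :
    ‖gradientSteps s f' x k - xstar‖ ≤ ‖x 0 - xstar‖ := by
  induction k with
  | zero => exact le_rfl
  | succ k ih =>
    have ht := one_le_nagWeight k
    have hsplit : nagWeight k • (gradientSteps s f' x (k + 1) - xstar) =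
        nagMomentum s f' xstar x (k + 1) +
          (nagWeight k - 1) • (gradientSteps s f' x k - xstar) := by
      rw [h.nagMomentum_succ_eq]
      module
    have hbound : nagWeight k * ‖gradientSteps s f' x (k + 1) - xstar‖ ≤
        nagWeight k * ‖x 0 - xstar‖ :=
      calc nagWeight k * ‖gradientSteps s f' x (k + 1) - xstar‖
          = ‖nagWeight k • (gradientSteps s f' x (k + 1) - xstar)‖ := by
            rw [norm_smul, Real.norm_of_nonneg (by linarith)]
        _ ≤ ‖nagMomentum s f' xstar x (k + 1)‖ +
            (nagWeight k - 1) * ‖gradientSteps s f' x k - xstar‖ := by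
            rw [hsplit]
            refine (norm_add_le _ _).trans_eq ?_
            rw [norm_smul, Real.norm_of_nonneg (by linarith)]
        _ ≤ ‖x 0 - xstar‖ + (nagWeight k - 1) * ‖x 0 - xstar‖ := by
            gcongr
            exact h.norm_nagMomentum_le hf hL hs hsL hmin (k + 1)
        _ = nagWeight k * ‖x 0 - xstar‖ := by ring
    exact le_of_mul_le_mul_left hbound (by linarith)

theorem nagWeight_mul_norm_sub_le (h : IsNAGC s f' x) (hf : IsConvexLSmooth f f' L)
    (hL : 0 < L) (hs : 0 ≤ s) (hsL : s * L ≤ 1 / 3) (hmin : ∀ z, f xstar ≤ f z) (k : ℕ) :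
    nagWeight k * ‖x k - gradientSteps s f' x k‖ ≤ 2 * ‖x 0 - xstar‖ := by
  have hsplit : nagWeight k • (x k - gradientSteps s f' x k) =
      nagMomentum s f' xstar x k - (gradientSteps s f' x k - xstar) := by
    rw [nagMomentum_eq]
    module
  calc nagWeight k * ‖x k - gradientSteps s f' x k‖
      = ‖nagWeight k • (x k - gradientSteps s f' x k)‖ := by
        rw [norm_smul, Real.norm_of_nonneg (by linarith [one_le_nagWeight k])]
    _ ≤ ‖nagMomentum s f' xstar x k‖ + ‖gradientSteps s f' x k - xstar‖ := by
        rw [hsplit]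
        exact norm_sub_le _ _
    _ ≤ 2 * ‖x 0 - xstar‖ := by
        linarith [h.norm_nagMomentum_le hf hL hs hsL hmin k,
          h.norm_gradientSteps_sub_le hf hL hs hsL hmin k]

theorem mul_sq_mul_sub_le (h : IsNAGC s f' x) (hf : IsConvexLSmooth f f' L) (hL : 0 < L)
    (hs : 0 ≤ s) (hsL : s * L ≤ 1 / 3) (hmin : ∀ z, f xstar ≤ f z) (k : ℕ) :
    s * ((k : ℝ) + 1) ^ 2 * (f (x k) - f xstar) ≤ 12 * ‖x 0 - xstar‖ ^ 2 := by
  have hstar := hf.gradient_eq_zero_of_forall_le hmin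
  rcases k with _ | k
  · have hdesc := hf.le_add_inner_add xstar (x 0)
    rw [hstar, inner_zero_left] at hdesc
    have := mul_le_mul_of_nonneg_right hsL (sq_nonneg ‖x 0 - xstar‖)
    push_cast
    nlinarith
  · set t := nagWeight (k + 1)
    set y := gradientSteps s f' x (k + 1)
    have hk : ((k + 1 : ℕ) : ℝ) + 1 = 2 * t - 1 := by
      simp only [t, nagWeight]
      push_cast
      ring
    have ht : 3 / 2 ≤ t := by
      simp only [t, nagWeight]
      push_cast
      linarith [k.cast_nonneg (α := ℝ)]
    have hnear := hf.mul_sub_le_mul_sub_add_sq_norm_sub hL hstar hs hsL (x (k + 1)) y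
    have hpot := h.mul_sub_gradientSteps_le hf hL hs hsL hmin (k + 1)
    have hdist : t ^ 2 * ‖x (k + 1) - y‖ ^ 2 ≤ 4 * ‖x 0 - xstar‖ ^ 2 := by
      have := pow_le_pow_left₀ (by positivity)
        (h.nagWeight_mul_norm_sub_le hf hL hs hsL hmin (k + 1)) 2
      linarith
    have hgap : 0 ≤ s * (f y - f xstar) := mul_nonneg hs (sub_nonneg.mpr (hmin _))
    rw [hk]
    calc s * (2 * t - 1) ^ 2 * (f (x (k + 1)) - f xstar)
        = (2 * t - 1) ^ 2 * (s * (f (x (k + 1)) - f xstar)) := by ring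
      _ ≤ (2 * t - 1) ^ 2 * (3 / 2 * (s * (f y - f xstar)) + ‖x (k + 1) - y‖ ^ 2 / 2) := by
        gcongr
      _ ≤ 16 / 3 * (t * (t - 1)) * (3 / 2 * (s * (f y - f xstar))) +
          4 * t ^ 2 * (‖x (k + 1) - y‖ ^ 2 / 2) := by
        rw [mul_add]
        gcongr
        · nlinarith
        · nlinarith
      _ ≤ 12 * ‖x 0 - xstar‖ ^ 2 := by nlinarith

theorem exists_mul_sq_norm_le (h : IsNAGC s f' x) (hf : IsConvexLSmooth f f' L) (hL : 0 < L)
    (hs : 0 ≤ s) (hsL : s * L ≤ 1 / 3) (hmin : ∀ z, f xstar ≤ f z) (k : ℕ) :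
    ∃ i ≤ k, s ^ 2 * ((k : ℝ) + 1) ^ 3 * ‖f' (x i)‖ ^ 2 ≤ 18 * ‖x 0 - xstar‖ ^ 2 := by
  obtain ⟨i, hi, hargmin⟩ := (Finset.range (k + 1)).exists_min_image
    (fun i => ‖f' (x i)‖ ^ 2) Finset.nonempty_range_add_one
  refine ⟨i, Nat.lt_succ_iff.mp (Finset.mem_range.mp hi), ?_⟩
  have hsum := h.sum_sq_norm_le hf hL hs hsL hmin (k + 1)
  have hlow : s ^ 2 / 3 * ‖f' (x i)‖ ^ 2 * ∑ j ∈ Finset.range (k + 1), nagWeight j ^ 2 ≤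
      ∑ j ∈ Finset.range (k + 1), s ^ 2 * nagWeight j ^ 2 / 3 * ‖f' (x j)‖ ^ 2 := by
    rw [Finset.mul_sum]
    refine Finset.sum_le_sum fun j hj => ?_
    calc s ^ 2 / 3 * ‖f' (x i)‖ ^ 2 * nagWeight j ^ 2
        = s ^ 2 * nagWeight j ^ 2 / 3 * ‖f' (x i)‖ ^ 2 := by ring
      _ ≤ s ^ 2 * nagWeight j ^ 2 / 3 * ‖f' (x j)‖ ^ 2 :=
          mul_le_mul_of_nonneg_left (hargmin j hj) (by positivity)
  have hcube := mul_le_mul_of_nonneg_left (cube_div_le_sum_sq_nagWeight k)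
    (by positivity : 0 ≤ s ^ 2 / 3 * ‖f' (x i)‖ ^ 2)
  nlinarith

end IsNAGC

end Lyapunov

theorem stmt6_general
    {n : ℕ} (L : ℝ)
    (f : EuclideanSpace ℝ (Fin n) → ℝ)
    (f' : EuclideanSpace ℝ (Fin n) → EuclideanSpace ℝ (Fin n))
    (hgrad : ∀ z, HasGradientAt f (f' z) z)
    (hconv : ConvexOn ℝ Set.univ f)
    (hLip : ∀ z w, ‖f' z - f' w‖ ≤ L * ‖z - w‖)
    (xstar : EuclideanSpace ℝ (Fin n)) (hmin : ∀ z, f xstar ≤ f z)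
    (s : ℝ) (hs0 : 0 < s) (hs : s ≤ 1 / (3 * L))
    (x v : ℕ → EuclideanSpace ℝ (Fin n))
    (hv0 : v 0 = -(Real.sqrt s • f' (x 0)))
    (hx : ∀ k : ℕ, x (k + 1) - x k = Real.sqrt s • v k)
    (hv : ∀ k : ℕ, v (k + 1) - v k = -((3 / ((k : ℝ) + 1)) • v (k + 1))
      - Real.sqrt s • (f' (x (k + 1)) - f' (x k))
      - (Real.sqrt s * (((k : ℝ) + 4) / ((k : ℝ) + 1))) • f' (x (k + 1)))
    : ∀ k : ℕ, f (x k) - f xstar ≤ 119 * ‖x 0 - xstar‖ ^ 2 / (s * ((k : ℝ) + 1) ^ 2) ∧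
      ∃ i ≤ k, ‖f' (x i)‖ ^ 2 ≤ 8568 * ‖x 0 - xstar‖ ^ 2 / (s ^ 2 * ((k : ℝ) + 1) ^ 3) := by
  have hL : 0 < L := by
    have := hs0.trans_le hs
    rw [one_div_pos] at this
    linarith
  have hsL : s * L ≤ 1 / 3 := by
    rw [le_div_iff₀ (by positivity)] at hs
    linarith
  have hf : IsConvexLSmooth f f' L := ⟨hgrad, hconv, hLip⟩
  have h := isNAGC_of_symplecticEuler hs0.le hv0 hx hv
  have hR := sq_nonneg ‖x 0 - xstar‖
  intro k
  constructor
  · rw [le_div_iff₀ (by positivity)]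
    linarith [h.mul_sq_mul_sub_le hf hL hs0.le hsL hmin k]
  · obtain ⟨i, hik, hi⟩ := h.exists_mul_sq_norm_le hf hL hs0.le hsL hmin k
    refine ⟨i, hik, ?_⟩
    rw [le_div_iff₀ (by positivity)]
    linarith

theorem stmt6
    {n : ℕ} (L : ℝ) (hL : 0 < L)
    (f : EuclideanSpace ℝ (Fin n) → ℝ)
    (f' : EuclideanSpace ℝ (Fin n) → EuclideanSpace ℝ (Fin n))
    (hgrad : ∀ z, HasGradientAt f (f' z) z)
    (hconv : ConvexOn ℝ Set.univ f)
    (hLip : ∀ z w, ‖f' z - f' w‖ ≤ L * ‖z - w‖)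
    (xstar : EuclideanSpace ℝ (Fin n)) (hmin : ∀ z, f xstar ≤ f z)
    (s : ℝ) (hs0 : 0 < s) (hs : s ≤ 1 / (3 * L))
    (x v : ℕ → EuclideanSpace ℝ (Fin n))
    (hv0 : v 0 = -(Real.sqrt s • f' (x 0)))
    (hx : ∀ k : ℕ, x (k + 1) - x k = Real.sqrt s • v k)
    (hv : ∀ k : ℕ, v (k + 1) - v k = -((3 / ((k : ℝ) + 1)) • v (k + 1))
      - Real.sqrt s • (f' (x (k + 1)) - f' (x k))
      - (Real.sqrt s * (((k : ℝ) + 4) / ((k : ℝ) + 1))) • f' (x (k + 1)))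
    : ∀ k : ℕ, f (x k) - f xstar ≤ 119 * ‖x 0 - xstar‖ ^ 2 / (s * ((k : ℝ) + 1) ^ 2) ∧
      ∃ i ≤ k, ‖f' (x i)‖ ^ 2 ≤ 8568 * ‖x 0 - xstar‖ ^ 2 / (s ^ 2 * ((k : ℝ) + 1) ^ 3) :=
  stmt6_general L f f' hgrad hconv hLip xstar hmin s hs0 hs x v hv0 hx hv
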